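/- Let {Y_{ij} : 1 ≤ i ≤ k, 1 ≤ j ≤ m} be real-valued random variables with k ≥ 2, m ≥ 1. Then P(⋃_{i=2}^k { max_{1≤j≤m} Y_{1j} > max_{1≤j≤m} Y_{ij} }) ≤ Σ_{i=2}^k P(Y_{11} > Y_{i1}) + Σ_{j=2}^m P(Y_{11} < Y_{1j}). (Additive upper bound on the probability of incorrect selection in robust ranking and selection.) -/

import Mathlib

/-!
If alternative `i` beats the nominal best `i₀` in worst-case value, either `i` already beats `i₀`
in scenario `j₀`, or `Y i₀ j₀ ≤ Y i j₀ ≤ max_j Y i j < max_j Y i₀ j`, so some other scenario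
`j ≠ j₀` of `i₀` exceeds scenario `j₀`. A union bound over these `k + m - 2` events finishes.
-/

open MeasureTheory

section

open Finset

variable {ι κ α Ω : Type*} [LinearOrder α] [DecidableEq κ]

lemma Finset.lt_or_exists_ne_lt_of_sup'_lt_sup' {s : Finset κ} {j₀ : κ} (hj₀ : j₀ ∈ s)
    {a b : κ → α} (h : s.sup' ⟨j₀, hj₀⟩ b < s.sup' ⟨j₀, hj₀⟩ a) :
    b j₀ < a j₀ ∨ ∃ j ∈ s.erase j₀, a j₀ < a j := by
  obtain ⟨j, hj, hbj⟩ := (lt_sup'_iff _).mp ((le_sup' b hj₀).trans_lt h)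
  by_cases hb : b j₀ < a j₀
  · exact Or.inl hb
  · have hlt : a j₀ < a j := (not_lt.mp hb).trans_lt hbj
    exact Or.inr ⟨j, mem_erase.mpr ⟨fun hjj => (hjj ▸ hlt).false, hj⟩, hlt⟩

variable [Fintype ι] [DecidableEq ι]

lemma setOf_exists_sup'_lt_subset (Y : ι → κ → Ω → α) (i₀ : ι) {s : Finset κ} {j₀ : κ}
    (hj₀ : j₀ ∈ s) :
    {ω | ∃ i, i ≠ i₀ ∧ s.sup' ⟨j₀, hj₀⟩ (Y i · ω) < s.sup' ⟨j₀, hj₀⟩ (Y i₀ · ω)} ⊆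
      (⋃ i ∈ univ.erase i₀, {ω | Y i j₀ ω < Y i₀ j₀ ω}) ∪
        ⋃ j ∈ s.erase j₀, {ω | Y i₀ j₀ ω < Y i₀ j ω} := by
  rintro ω ⟨i, hi, hlt⟩
  rcases lt_or_exists_ne_lt_of_sup'_lt_sup' hj₀ hlt with hbeat | ⟨j, hj, hexceed⟩
  · exact Or.inl (Set.mem_biUnion (mem_erase.mpr ⟨hi, mem_univ i⟩) hbeat)
  · exact Or.inr (Set.mem_biUnion hj hexceed)

theorem measure_exists_sup'_lt_le [MeasurableSpace Ω] (μ : Measure Ω) (Y : ι → κ → Ω → α)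
    (i₀ : ι) {s : Finset κ} {j₀ : κ} (hj₀ : j₀ ∈ s) :
    μ {ω | ∃ i, i ≠ i₀ ∧ s.sup' ⟨j₀, hj₀⟩ (Y i · ω) < s.sup' ⟨j₀, hj₀⟩ (Y i₀ · ω)} ≤
      ∑ i ∈ univ.erase i₀, μ {ω | Y i j₀ ω < Y i₀ j₀ ω} +
        ∑ j ∈ s.erase j₀, μ {ω | Y i₀ j₀ ω < Y i₀ j ω} :=
  calc _ ≤ μ ((⋃ i ∈ univ.erase i₀, {ω | Y i j₀ ω < Y i₀ j₀ ω}) ∪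
          ⋃ j ∈ s.erase j₀, {ω | Y i₀ j₀ ω < Y i₀ j ω}) :=
        measure_mono (setOf_exists_sup'_lt_subset Y i₀ hj₀)
    _ ≤ _ := (measure_union_le _ _).trans
        (add_le_add (measure_biUnion_finset_le _ _) (measure_biUnion_finset_le _ _))

end

theorem stmt_2 {Ω : Type*} [MeasurableSpace Ω] (P : Measure Ω)
    (k m : ℕ) (hk : 2 ≤ k) (hm : 1 ≤ m) (Y : Fin k → Fin m → Ω → ℝ) :
    let i1 : Fin k := ⟨0, by omega⟩
    let j1 : Fin m := ⟨0, hm⟩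
    let Mx : Fin k → Ω → ℝ := fun i ω =>
      Finset.univ.sup' (Finset.univ_nonempty_iff.mpr ⟨j1⟩) fun j => Y i j ω
    P {ω | ∃ i, i ≠ i1 ∧ Mx i1 ω > Mx i ω} ≤
      ∑ i ∈ Finset.univ.erase i1, P {ω | Y i1 j1 ω > Y i j1 ω} +
      ∑ j ∈ Finset.univ.erase j1, P {ω | Y i1 j1 ω < Y i1 j ω} := by
  intro i1 j1 Mx
  exact measure_exists_sup'_lt_le P Y i1 (Finset.mem_univ j1)
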